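/- arXiv:math/0608234 — 7 statements merged into one kernel-verified Lean document; each statement's English description precedes it below -/
import Mathlib

section
/- With the above setup, for all c, x, y ∈ C one has x ⊗ (c·y) − (s(c)·x) ⊗ y ∈ N. In other words, in the quotient of C ⊗_A C by N, multiplication by c on the right tensor factor coincides with multiplication by s(c) on the left tensor factor. -/
open TensorProduct

/-- The subring of fixed points of a ring endomorphism `s`. -/
def fixedSubring {C : Type*} [CommRing C] (s : C →+* C) : Subring C :=
  RingHom.eqLocus s (RingHom.id C)

/-- The map `a_s : C → C ⊗_{C^s} C`, `c ↦ X ⊗ c + 1 ⊗ X·c`. -/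
noncomputable def aMap {C : Type*} [CommRing C] (s : C →+* C) (X : C) (c : C) :
    C ⊗[fixedSubring s] C :=
  X ⊗ₜ c + 1 ⊗ₜ (X * c)

/-!
Let `δ c x y = x ⊗ c·y − s(c)·x ⊗ y` (`twistedDiff`). It vanishes for `c ∈ A = C^s` since the tensor
product is over `A`, it is additive in `c`, and `δ (c·d) x y = δ c x (d·y) + δ d (s(c)·x) y`.
For `c = X` one has `s X = −X`, so `δ X x y = x · a_s(y) ∈ N`. Writing `c = a₀ + a₁·X` in the
basis `{1, X}` gives `δ c x y = δ X (a₁·x) y = (a₁·x) · a_s(y) ∈ N`.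
-/

namespace fixedSubring

variable {C : Type*} [CommRing C] (s : C →+* C)

noncomputable def twistedDiff (c x y : C) : C ⊗[fixedSubring s] C :=
  x ⊗ₜ (c * y) - (s c * x) ⊗ₜ y

theorem tmul_coe_mul (a : fixedSubring s) (x y : C) :
    (x ⊗ₜ ((a : C) * y) : C ⊗[fixedSubring s] C) = ((a : C) * x) ⊗ₜ y :=
  (smul_tmul a x y).symm

theorem twistedDiff_coe (a : fixedSubring s) (x y : C) : twistedDiff s a x y = 0 := by
  rw [twistedDiff, show s a = a from a.2, tmul_coe_mul, sub_self]

theorem twistedDiff_add (c d x y : C) :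
    twistedDiff s (c + d) x y = twistedDiff s c x y + twistedDiff s d x y := by
  simp only [twistedDiff, map_add, add_mul, tmul_add, add_tmul]
  abel

theorem twistedDiff_mul (c d x y : C) :
    twistedDiff s (c * d) x y = twistedDiff s c x (d * y) + twistedDiff s d (s c * x) y := by
  simp only [twistedDiff, map_mul, mul_assoc, mul_left_comm (s d)]
  abel

theorem twistedDiff_of_map_eq_neg {X : C} (hX : s X = -X) (x y : C) :
    twistedDiff s X x y = x • aMap s X y := by
  rw [twistedDiff, aMap, hX, smul_add, smul_tmul', smul_tmul', smul_eq_mul, smul_eq_mul,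
    mul_one, neg_mul, neg_tmul, sub_neg_eq_add, mul_comm x X, add_comm]

end fixedSubring

open fixedSubring

theorem stmt1_general {C : Type*} [CommRing C] (s : C →+* C)
    (X : C) (hX : s X = -X)
    (b : Module.Basis (Fin 2) (fixedSubring s) C) (hb0 : b 0 = 1) (hb1 : b 1 = X) :
    ∀ c x y : C,
      (x ⊗ₜ (c * y) - (s c * x) ⊗ₜ y : C ⊗[fixedSubring s] C) ∈
        Submodule.span C (Set.range (aMap s X)) := by
  intro c x y
  obtain ⟨a₀, a₁, rfl⟩ : ∃ a₀ a₁ : fixedSubring s, c = a₀ + a₁ * X := by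
    refine ⟨b.repr c 0, b.repr c 1, ?_⟩
    conv_lhs => rw [← b.sum_repr c]
    simp [Fin.sum_univ_two, hb0, hb1, Subring.smul_def]
  change twistedDiff s _ x y ∈ _
  rw [twistedDiff_add, twistedDiff_mul, twistedDiff_coe, twistedDiff_coe, zero_add, zero_add,
    twistedDiff_of_map_eq_neg s hX]
  exact Submodule.smul_mem _ _ (Submodule.subset_span ⟨y, rfl⟩)

/-- in `C ⊗_A C` modulo the `C`-submodule `N` generated by the image of `a_s`
(`C` acting on the left tensor factor), multiplication by `c` on the right factor agrees with
multiplication by `s c` on the left factor. -/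
theorem stmt1 {C : Type*} [CommRing C] (s : C →+* C) (hs : ∀ c, s (s c) = c)
    (X : C) (hX : s X = -X)
    (b : Module.Basis (Fin 2) (fixedSubring s) C) (hb0 : b 0 = 1) (hb1 : b 1 = X) :
    ∀ c x y : C,
      (x ⊗ₜ (c * y) - (s c * x) ⊗ₜ y : C ⊗[fixedSubring s] C) ∈
        Submodule.span C (Set.range (aMap s X)) :=
  stmt1_general s X hX b hb0 hb1
end

section
/- With the above setup, the image of a_s is itself a C-submodule of C ⊗_A C for the left-factor action: one has a_s(c) = c·(X ⊗ 1 + 1 ⊗ X) for every c ∈ C, so the image of a_s equals C·(X ⊗ 1 + 1 ⊗ X); moreover the quotient module (C ⊗_A C)/im(a_s) is a free C-module of rank 1, generated by the class of 1 ⊗ 1. -/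
open TensorProduct

/-!
Since `s X = -X`, the element `X²` lies in `A = C^s`, so `1 ⊗ X² = X² ⊗ 1`. Hence the two
`A`-linear maps `a_s` and `c ↦ c • (X ⊗ 1 + 1 ⊗ X)` agree on the basis `{1, X}`.
By base change, `1 ⊗ 1, 1 ⊗ X` is a `C`-basis of `C ⊗_A C` in which
`X ⊗ 1 + 1 ⊗ X = X • (1 ⊗ 1) + 1 ⊗ X`. In a free module with basis `e₀, e₁`, the span of
`r • e₀ + e₁` is the kernel of the coordinate form `e₀* - r • e₁*`, which maps `e₀` to `1`,
so the quotient is free on the class of `e₀`.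
-/

namespace Module.Basis

variable {R M : Type*} [CommRing R] [AddCommGroup M] [Module R M]

theorem ker_coord_zero_sub_smul_coord_one (B : Basis (Fin 2) R M) (r : R) :
    LinearMap.ker (B.coord 0 - r • B.coord 1) = Submodule.span R {r • B 0 + B 1} := by
  apply le_antisymm
  · intro t ht
    have hr : B.repr t 0 = r * B.repr t 1 := by
      simpa [sub_eq_zero] using ht
    have hrepr := B.sum_repr t
    rw [Fin.sum_univ_two, hr, mul_comm, mul_smul, ← smul_add] at hrepr
    exact Submodule.mem_span_singleton.2 ⟨_, hrepr⟩
  · rw [Submodule.span_le, Set.singleton_subset_iff, SetLike.mem_coe, LinearMap.mem_ker]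
    simp

theorem exists_basis_quotient_span_smul_add (B : Basis (Fin 2) R M) (r : R) :
    ∃ bq : Basis (Fin 1) R (M ⧸ Submodule.span R {r • B 0 + B 1}),
      bq 0 = Submodule.Quotient.mk (B 0) := by
  set f := B.coord 0 - r • B.coord 1
  have hf : f (B 0) = 1 := by simp [f]
  have hsurj : Function.Surjective f := fun c =>
    ⟨c • B 0, by rw [map_smul, hf, smul_eq_mul, mul_one]⟩
  let e := (Submodule.quotEquivOfEq _ _ (B.ker_coord_zero_sub_smul_coord_one r).symm).trans
    (f.quotKerEquivOfSurjective hsurj)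
  refine ⟨(Basis.singleton (Fin 1) R).map e.symm, ?_⟩
  rw [Basis.map_apply, Basis.singleton_apply, LinearEquiv.symm_apply_eq]
  exact hf.symm

end Module.Basis

section FixedSubring

variable {C : Type*} [CommRing C] {s : C →+* C} {X : C}

theorem mul_self_mem_fixedSubring (hX : s X = -X) : X * X ∈ fixedSubring s := by
  show s (X * X) = X * X
  rw [map_mul, hX, neg_mul_neg]

theorem one_tmul_mul_self (hX : s X = -X) :
    (1 : C) ⊗ₜ[fixedSubring s] (X * X) = (X * X) ⊗ₜ 1 := by
  have h : X * X = (⟨X * X, mul_self_mem_fixedSubring hX⟩ : fixedSubring s) • (1 : C) :=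
    (mul_one _).symm
  rw [h, tmul_smul, smul_tmul']

theorem aMap_eq_smul (hX : s X = -X) (b : Module.Basis (Fin 2) (fixedSubring s) C)
    (hb0 : b 0 = 1) (hb1 : b 1 = X) (c : C) :
    aMap s X c = c • ((X ⊗ₜ 1 + 1 ⊗ₜ X : C ⊗[fixedSubring s] C)) := by
  let F : C →ₗ[fixedSubring s] C ⊗[fixedSubring s] C :=
    TensorProduct.mk _ C C X + TensorProduct.mk _ C C 1 ∘ₗ LinearMap.mulLeft _ X
  let G : C →ₗ[fixedSubring s] C ⊗[fixedSubring s] C :=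
    (LinearMap.toSpanSingleton C _ (X ⊗ₜ 1 + 1 ⊗ₜ X)).restrictScalars _
  have hFG : F = G := by
    refine b.ext fun i => ?_
    fin_cases i
    · simp [F, G, hb0]
    · simp only [F, G, hb1, Fin.mk_one, LinearMap.add_apply, LinearMap.comp_apply,
        TensorProduct.mk_apply, LinearMap.mulLeft_apply, LinearMap.restrictScalars_apply,
        LinearMap.toSpanSingleton_apply, one_tmul_mul_self hX, smul_add, smul_tmul',
        smul_eq_mul, mul_one]
      abel
  exact LinearMap.congr_fun hFG c

end FixedSubring

theorem stmt2_general {C : Type*} [CommRing C] (s : C →+* C)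
    (X : C) (hX : s X = -X)
    (b : Module.Basis (Fin 2) (fixedSubring s) C) (hb0 : b 0 = 1) (hb1 : b 1 = X) :
    (∀ c : C, aMap s X c = c • ((X ⊗ₜ 1 + 1 ⊗ₜ X : C ⊗[fixedSubring s] C))) ∧
    Set.range (aMap s X) =
      ↑(Submodule.span C {(X ⊗ₜ 1 + 1 ⊗ₜ X : C ⊗[fixedSubring s] C)}) ∧
    ∃ bq : Module.Basis (Fin 1) C
        ((C ⊗[fixedSubring s] C) ⧸ Submodule.span C (Set.range (aMap s X))),
      bq 0 = Submodule.Quotient.mk ((1 : C) ⊗ₜ (1 : C)) := by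
  have hsmul := aMap_eq_smul hX b hb0 hb1
  have hrange : Set.range (aMap s X) =
      ↑(Submodule.span C {(X ⊗ₜ 1 + 1 ⊗ₜ X : C ⊗[fixedSubring s] C)}) := by
    ext t
    simp only [Set.mem_range, SetLike.mem_coe, Submodule.mem_span_singleton, hsmul]
  refine ⟨hsmul, hrange, ?_⟩
  let B := b.baseChange C
  have hB0 : B 0 = (1 : C) ⊗ₜ (1 : C) := by rw [Module.Basis.baseChange_apply, hb0]
  have hgen : (X ⊗ₜ 1 + 1 ⊗ₜ X : C ⊗[fixedSubring s] C) = X • B 0 + B 1 := by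
    rw [hB0, Module.Basis.baseChange_apply, hb1, smul_tmul', smul_eq_mul, mul_one]
  rw [hrange, Submodule.span_eq, hgen, ← hB0]
  exact B.exists_basis_quotient_span_smul_add X

/-- `a_s c = c • (X ⊗ 1 + 1 ⊗ X)` for the left-factor `C`-action, the image of
`a_s` is the cyclic `C`-submodule generated by `X ⊗ 1 + 1 ⊗ X`, and the quotient of `C ⊗_A C`
by the image of `a_s` is a free `C`-module of rank 1 generated by the class of `1 ⊗ 1`. -/
theorem stmt2 {C : Type*} [CommRing C] (s : C →+* C) (hs : ∀ c, s (s c) = c)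
    (X : C) (hX : s X = -X)
    (b : Module.Basis (Fin 2) (fixedSubring s) C) (hb0 : b 0 = 1) (hb1 : b 1 = X) :
    (∀ c : C, aMap s X c = c • ((X ⊗ₜ 1 + 1 ⊗ₜ X : C ⊗[fixedSubring s] C))) ∧
    Set.range (aMap s X) =
      ↑(Submodule.span C {(X ⊗ₜ 1 + 1 ⊗ₜ X : C ⊗[fixedSubring s] C)}) ∧
    ∃ bq : Module.Basis (Fin 1) C
        ((C ⊗[fixedSubring s] C) ⧸ Submodule.span C (Set.range (aMap s X))),
      bq 0 = Submodule.Quotient.mk ((1 : C) ⊗ₜ (1 : C)) :=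
  stmt2_general s X hX b hb0 hb1
end

section
/- Let k, l be integers with 1 ≤ k ≤ n and k ≥ l > k − d. Then for every k-element subset 𝒳 ⊆ {1,…,n} there exists a polynomial f ∈ ℂ[x_1,…,x_n, y_1,…,y_r] such that (1) substituting y_1 = … = y_r = 0 into f yields the elementary symmetric polynomial e_l((x_i)_{i∈𝒳}), and (2) f(b, a) = 0 for every (b, a) ∈ V. -/
open MvPolynomial

/-- The set of pairs `(b, a) ∈ ℂⁿ × ℂʳ` whose `b`-coordinates consist of `a_j` with
multiplicity `μ_j` for each `j`, in some order. -/
def muPoints (n r : ℕ) (μ : Fin r → ℕ) : Set ((Fin n → ℂ) × (Fin r → ℂ)) :=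
  {p | ∃ g : Fin n → Fin r,
    (∀ j, (Finset.univ.filter (fun i => g i = j)).card = μ j) ∧
    ∀ i, p.1 i = p.2 (g i)}

/-- The `l`-th elementary symmetric polynomial in the variables `x_i`, `i ∈ 𝒳`, viewed inside
`ℂ[x_1,…,x_n]`. -/
noncomputable def esymmOn (n : ℕ) (𝒳 : Finset (Fin n)) (l : ℕ) : MvPolynomial (Fin n) ℂ :=
  ∑ T ∈ 𝒳.powersetCard l, ∏ i ∈ T, X i

/-! Take for `f` the coefficient of `t^l` in `∏_{i ∈ 𝒳} (1 + x_i t) / ∏_j (1 + y_j t)^{m_j}`.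
At `y = 0` the denominator is `1` and the `t^l`-coefficient of the numerator is `e_l`. At a point
of `V`, at least `m_j` of the `b_i` with `i ∈ 𝒳` equal `a_j`, so the denominator divides the
numerator and the quotient is a polynomial of degree at most `k - d < l`. -/

open Finset

namespace Polynomial

variable {R ι : Type*} [CommSemiring R]

theorem coeff_prod_one_add_C_mul_X (s : Finset ι) (v : ι → R) (l : ℕ) :
    (∏ i ∈ s, (1 + C (v i) * X)).coeff l = ∑ T ∈ s.powersetCard l, ∏ i ∈ T, v i := by
  simp_rw [prod_one_add, finsetSum_coeff, prod_mul_distrib, prod_const,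
    ← map_prod, coeff_C_mul_X_pow, powersetCard_eq_filter, sum_filter, eq_comm]

theorem natDegree_one_add_C_mul_X_le (a : R) : (1 + C a * X).natDegree ≤ 1 := by
  rw [add_comm, ← C_1]
  exact natDegree_linear_le

theorem natDegree_prod_pow_one_add_C_mul_X_le (s : Finset ι) (v : ι → R) (e : ι → ℕ) :
    (∏ i ∈ s, (1 + C (v i) * X) ^ e i).natDegree ≤ ∑ i ∈ s, e i :=
  (natDegree_prod_le _ _).trans <| sum_le_sum fun i _ =>
    (natDegree_pow_le_of_le _ (natDegree_one_add_C_mul_X_le (v i))).trans (mul_one _).le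

end Polynomial

namespace PowerSeries

variable {R S : Type*} [CommRing R] [CommRing S]

theorem map_coeff_invOfUnit_mul_of_map_eq (χ : R →+* S) {A P : Polynomial R}
    (hA : A.coeff 0 = 1) {Q : Polynomial S} (hPQ : P.map χ = A.map χ * Q) (l : ℕ) :
    χ (coeff l (invOfUnit (A : R⟦X⟧) 1 * P)) = Q.coeff l := by
  have hinv : invOfUnit (A : R⟦X⟧) 1 * A = 1 := invOfUnit_mul _ _ (by simpa using hA)
  rw [← coeff_map, map_mul, ← Polynomial.polynomial_map_coe, hPQ, Polynomial.coe_mul,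
    Polynomial.polynomial_map_coe, ← mul_assoc, ← map_mul, hinv, map_one, one_mul,
    Polynomial.coeff_coe]

end PowerSeries

theorem Finset.card_filter_sub_card_compl_le {σ : Type*} [Fintype σ] [DecidableEq σ]
    (s : Finset σ) (p : σ → Prop) [DecidablePred p] :
    #{i | p i} - #sᶜ ≤ #{i ∈ s | p i} := by
  have hsub : ({i | p i} : Finset σ) ⊆ {i ∈ s | p i} ∪ sᶜ := by
    intro i
    by_cases hi : i ∈ s <;> simp [hi]
  have := (card_le_card hsub).trans (card_union_le _ _)
  omega

section QuotientCoeff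

variable (R : Type*) [CommRing R] {σ τ : Type*} [Fintype τ]

/-- The coefficient of `t^l` in the power series `∏_{i ∈ 𝒳} (1 + x_i t) / ∏_j (1 + y_j t)^{m_j}`,
where `x_i = X (inl i)` and `y_j = X (inr j)`. -/
noncomputable def quotientCoeff (𝒳 : Finset σ) (m : τ → ℕ) (l : ℕ) : MvPolynomial (σ ⊕ τ) R :=
  PowerSeries.coeff l
    (PowerSeries.invOfUnit
      ((∏ j, (1 + Polynomial.C (X (Sum.inr j)) * Polynomial.X) ^ m j :
        Polynomial (MvPolynomial (σ ⊕ τ) R)) : PowerSeries (MvPolynomial (σ ⊕ τ) R)) 1 *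
      (∏ i ∈ 𝒳, (1 + Polynomial.C (X (Sum.inl i)) * Polynomial.X) :
        Polynomial (MvPolynomial (σ ⊕ τ) R)))

variable {R}

theorem aeval_quotientCoeff_inr_zero (𝒳 : Finset σ) (m : τ → ℕ) (l : ℕ) :
    aeval (Sum.elim (fun i => (X i : MvPolynomial σ R)) (fun _ => 0)) (quotientCoeff R 𝒳 m l) =
      ∑ T ∈ 𝒳.powersetCard l, ∏ i ∈ T, X i := by
  rw [← Polynomial.coeff_prod_one_add_C_mul_X]
  exact PowerSeries.map_coeff_invOfUnit_mul_of_map_eq (R := MvPolynomial (σ ⊕ τ) R)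
    (aeval _).toRingHom (by simp [Polynomial.coeff_zero_eq_eval_zero, Polynomial.eval_prod])
    (by simp [Polynomial.map_prod]) l

theorem eval_quotientCoeff_eq_zero [DecidableEq τ] {𝒳 : Finset σ} {m : τ → ℕ} {l : ℕ}
    (g : σ → τ) (a : τ → R) (hm : ∀ j, m j ≤ #{i ∈ 𝒳 | g i = j}) (hl : #𝒳 < l + ∑ j, m j) :
    eval (Sum.elim (a ∘ g) a) (quotientCoeff R 𝒳 m l) = 0 := by
  set c : τ → ℕ := fun j => #{i ∈ 𝒳 | g i = j}
  set Q := ∏ j, (1 + Polynomial.C (a j) * Polynomial.X) ^ (c j - m j)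
  have hPQ : (∏ i ∈ 𝒳, (1 + Polynomial.C (a (g i)) * Polynomial.X)) =
      (∏ j, (1 + Polynomial.C (a j) * Polynomial.X) ^ m j) * Q := by
    rw [← prod_fiberwise' 𝒳 g fun j => 1 + Polynomial.C (a j) * Polynomial.X, ← prod_mul_distrib]
    refine prod_congr rfl fun j _ => ?_
    rw [prod_const, ← pow_add, Nat.add_sub_cancel' (hm j)]
  have hcard : ∑ j, (c j - m j) + ∑ j, m j = #𝒳 := by
    rw [← sum_add_distrib, card_eq_sum_card_fiberwise fun i _ => mem_univ (g i)]
    exact sum_congr rfl fun j _ => Nat.sub_add_cancel (hm j)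
  have hdeg : Q.natDegree < l :=
    (Polynomial.natDegree_prod_pow_one_add_C_mul_X_le _ _ _).trans_lt (by omega)
  rw [← Polynomial.coeff_eq_zero_of_natDegree_lt hdeg]
  exact PowerSeries.map_coeff_invOfUnit_mul_of_map_eq (R := MvPolynomial (σ ⊕ τ) R) (eval _)
    (by simp [Polynomial.coeff_zero_eq_eval_zero, Polynomial.eval_prod])
    (by simpa [Polynomial.map_prod] using hPQ) l

end QuotientCoeff

theorem stmt3_general (n r : ℕ) (μ : Fin r → ℕ)
    (k : ℕ)
    (l : ℕ)
    (hld : (k : ℤ) - (∑ j, (μ j - (n - k)) : ℕ) < l)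
    (𝒳 : Finset (Fin n)) (h𝒳 : 𝒳.card = k) :
    ∃ f : MvPolynomial (Fin n ⊕ Fin r) ℂ,
      aeval (Sum.elim (fun i => (X i : MvPolynomial (Fin n) ℂ)) (fun _ => 0)) f =
        esymmOn n 𝒳 l ∧
      ∀ p ∈ muPoints n r μ, eval (Sum.elim p.1 p.2) f = 0 := by
  subst h𝒳
  refine ⟨quotientCoeff ℂ 𝒳 (fun j => μ j - (n - 𝒳.card)) l,
    aeval_quotientCoeff_inr_zero _ _ _, ?_⟩
  rintro ⟨b, a⟩ ⟨g, hμ, hb⟩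
  obtain rfl : b = a ∘ g := funext hb
  refine eval_quotientCoeff_eq_zero g a (fun j => ?_) (by omega)
  simpa [hμ j, card_compl] using card_filter_sub_card_compl_le 𝒳 (g · = j)

/-- for `1 ≤ k ≤ n` and `k ≥ l > k − d`, and any `k`-element subset
`𝒳 ⊆ {1,…,n}`, there is `f ∈ ℂ[x_1,…,x_n,y_1,…,y_r]` specialising at `y = 0` to
`e_l((x_i)_{i ∈ 𝒳})` and vanishing on `V`. -/
theorem stmt3 (n r : ℕ) (hn : 1 ≤ n) (hr : 1 ≤ r) (μ : Fin r → ℕ)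
    (hμ : ∀ j, 0 < μ j) (hsum : ∑ j, μ j = n)
    (k : ℕ) (hk1 : 1 ≤ k) (hkn : k ≤ n)
    (l : ℕ) (hlk : l ≤ k)
    (hld : (k : ℤ) - (∑ j, (μ j - (n - k)) : ℕ) < l)
    (𝒳 : Finset (Fin n)) (h𝒳 : 𝒳.card = k) :
    ∃ f : MvPolynomial (Fin n ⊕ Fin r) ℂ,
      aeval (Sum.elim (fun i => (X i : MvPolynomial (Fin n) ℂ)) (fun _ => 0)) f =
        esymmOn n 𝒳 l ∧
      ∀ p ∈ muPoints n r μ, eval (Sum.elim p.1 p.2) f = 0 :=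
  stmt3_general n r μ k l hld 𝒳 h𝒳
end

section
/- Let λ be a partition fitting into the n×n box and let M = {λ_i + n − i : 1 ≤ i ≤ n} ⊆ {0,…,2n−1} be its associated n-element subset. Then λ_i ≤ n − i for all 1 ≤ i ≤ n (i.e. λ fits into the staircase (n−1, n−2, …, 1, 0)) if and only if M satisfies the ballot condition. -/
/-- The set of minus-positions `{λ_i + n − i : 1 ≤ i ≤ n}` associated to a partition `λ`
fitting into the `n×n` box (here `λ` is 0-indexed: `λ i` is the `(i+1)`-st part). -/
def minusSet (n : ℕ) (lam : Fin n → ℕ) : Finset ℕ :=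
  Finset.image (fun i : Fin n => lam i + (n - 1 - (i : ℕ))) Finset.univ

/-- a partition in the `n×n` box fits into the staircase `(n−1,…,1,0)` iff its
associated `n`-element subset of `{0,…,2n−1}` satisfies the ballot condition. -/
theorem stmt7 (n : ℕ) (hn : 1 ≤ n) (lam : Fin n → ℕ)
    (hanti : Antitone lam) (hbox : ∀ i, lam i ≤ n) :
    (∀ i : Fin n, lam i ≤ n - 1 - (i : ℕ)) ↔
    (∀ p < 2 * n, p + 1 ≤ 2 * ((minusSet n lam) ∩ Finset.range (p + 1)).card) := by
  set f : Fin n → ℕ := fun i => lam i + (n - 1 - (i : ℕ)) with hf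
  have hanti' : StrictAnti f := by
    intro i j hij
    have h1 : lam j ≤ lam i := hanti hij.le
    have hij' : (i : ℕ) < (j : ℕ) := hij
    have hjn := j.isLt
    simp only [hf]
    omega
  have hcard : ∀ p : ℕ, ((minusSet n lam) ∩ Finset.range (p + 1)).card
      = (Finset.univ.filter (fun i : Fin n => f i ≤ p)).card := by
    intro p
    have himg : (minusSet n lam) ∩ Finset.range (p + 1)
        = Finset.image f (Finset.univ.filter (fun i : Fin n => f i ≤ p)) := by
      ext x
      simp only [minusSet, Finset.mem_inter, Finset.mem_image, Finset.mem_range,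
        Finset.mem_filter, Finset.mem_univ, true_and, Nat.lt_succ_iff]
      constructor
      · rintro ⟨⟨i, rfl⟩, hx⟩; exact ⟨i, hx, rfl⟩
      · rintro ⟨i, hi, rfl⟩; exact ⟨⟨i, rfl⟩, hi⟩
    rw [himg, Finset.card_image_of_injective _ hanti'.injective]
  -- card of tail filters
  have htail : ∀ t : ℕ, (Finset.univ.filter (fun i : Fin n => t ≤ (i : ℕ))).card = n - t := by
    intro t
    have : Finset.Ico t n = Finset.image (fun i : Fin n => (i : ℕ))
        (Finset.univ.filter (fun i : Fin n => t ≤ (i : ℕ))) := by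
      ext x
      simp only [Finset.mem_Ico, Finset.mem_image, Finset.mem_filter, Finset.mem_univ, true_and]
      constructor
      · rintro ⟨h1, h2⟩; exact ⟨⟨x, h2⟩, h1, rfl⟩
      · rintro ⟨i, hi, rfl⟩; exact ⟨hi, i.isLt⟩
    have h2 := congrArg Finset.card this
    rw [Finset.card_image_of_injective _ Fin.val_injective, Nat.card_Ico] at h2
    omega
  constructor
  · intro hstair p hp
    rw [hcard]
    set t := (2 * n - p - 1) / 2 with ht
    have hsub : (Finset.univ.filter (fun i : Fin n => t ≤ (i : ℕ)))
        ⊆ (Finset.univ.filter (fun i : Fin n => f i ≤ p)) := by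
      intro i hi
      simp only [Finset.mem_filter, Finset.mem_univ, true_and] at hi ⊢
      have h1 := hstair i
      have h2 := i.isLt
      simp only [hf]
      omega
    have h3 := Finset.card_le_card hsub
    rw [htail t] at h3
    omega
  · intro hb i
    by_contra hlt
    push_neg at hlt
    have hi := i.isLt
    have hp2 : 2 * (n - 1 - (i : ℕ)) < 2 * n := by omega
    have hball := hb _ hp2
    rw [hcard] at hball
    have hsub : (Finset.univ.filter (fun j : Fin n => f j ≤ 2 * (n - 1 - (i : ℕ))))
        ⊆ (Finset.univ.filter (fun j : Fin n => (i : ℕ) + 1 ≤ (j : ℕ))) := by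
      intro j hj
      simp only [Finset.mem_filter, Finset.mem_univ, true_and] at hj ⊢
      by_contra hji
      push_neg at hji
      have hji' : j ≤ i := by
        exact Fin.le_def.mpr (by omega)
      have hle : f i ≤ f j := hanti'.antitone hji'
      simp only [hf] at hle hj
      omega
    have h3 := Finset.card_le_card hsub
    rw [htail ((i : ℕ) + 1)] at h3
    omega
end

section
/- The map sending a crossingless matching f of 2n points to its set of left endpoints {i : i < f(i)} is a bijection from the set of crossingless matchings of 2n points onto the set of n-element subsets S ⊆ {0,…,2n−1} satisfying the ballot condition: 2·|S ∩ {0,…,p}| ≥ p+1 for every p ∈ {0,…,2n−1}. -/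
/-- A crossingless matching of the `2n` points `{0,…,2n−1}`: a fixed-point-free involution
with no crossing pair of arcs. -/
def IsCrossinglessMatching {m : ℕ} (f : Equiv.Perm (Fin m)) : Prop :=
  (∀ i, f (f i) = i) ∧ (∀ i, f i ≠ i) ∧ ¬∃ i j : Fin m, i < j ∧ j < f i ∧ f i < f j

/-- The set of left endpoints of a matching, as a set of natural numbers. -/
def leftEndpoints {m : ℕ} (f : Equiv.Perm (Fin m)) : Finset ℕ :=
  (Finset.univ.filter (fun i : Fin m => i < f i)).image (fun i : Fin m => (i : ℕ))

namespace Stmt8Aux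

lemma ivt_down (g : ℕ → ℤ) (step : ∀ k, g (k+1) = g k + 1 ∨ g (k+1) = g k - 1) :
    ∀ d a (t : ℤ), t < g a → g (a+d) ≤ t → ∃ k, a ≤ k ∧ k ≤ a+d ∧ g k = t := by
  intro d
  induction d with
  | zero => intro a t h1 h2; simp only [Nat.add_zero] at h2; omega
  | succ d ih =>
    intro a t h1 h2
    by_cases hc : t < g (a+1)
    · obtain ⟨k, hk1, hk2, hk3⟩ := ih (a+1) t hc (by rwa [show a+1+d = a+(d+1) by omega])
      exact ⟨k, by omega, by omega, hk3⟩
    · have : g (a+1) = t := by rcases step a with h | h <;> omega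
      exact ⟨a+1, by omega, by omega, this⟩

lemma ivt_up (g : ℕ → ℤ) (step : ∀ k, g (k+1) = g k + 1 ∨ g (k+1) = g k - 1) :
    ∀ d a (t : ℤ), g a ≤ t → t < g (a+d) → ∃ k, a ≤ k ∧ k ≤ a+d ∧ g k = t := by
  intro d
  induction d with
  | zero => intro a t h1 h2; simp only [Nat.add_zero] at h2; omega
  | succ d ih =>
    intro a t h1 h2
    by_cases hc : t < g (a+d)
    · obtain ⟨k, hk1, hk2, hk3⟩ := ih a t h1 hc
      exact ⟨k, hk1, by omega, hk3⟩
    · have : g (a+d) = t := by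
        rcases step (a+d) with h | h <;> rw [show a+(d+1) = a+d+1 by omega] at h2 <;> omega
      exact ⟨a+d, by omega, by omega, this⟩

variable {m : ℕ}

def covSet (f : Equiv.Perm (Fin m)) (p : ℕ) : Finset (Fin m) :=
  Finset.univ.filter (fun i => (i : ℕ) < p ∧ p ≤ (f i : ℕ))

lemma mem_covSet {f : Equiv.Perm (Fin m)} {p : ℕ} {i : Fin m} :
    i ∈ covSet f p ↔ (i : ℕ) < p ∧ p ≤ (f i : ℕ) := by
  simp [covSet]

lemma mem_leftEndpoints {f : Equiv.Perm (Fin m)} {x : ℕ} :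
    x ∈ leftEndpoints f ↔ ∃ i : Fin m, i < f i ∧ (i : ℕ) = x := by
  simp [leftEndpoints]

/-- key non-crossing consequence: an arc strictly covering the left endpoint `i`
of the arc `(i, f i)` must reach beyond `f i`. -/
lemma cov_key {f : Equiv.Perm (Fin m)} (hf : IsCrossinglessMatching f) {i i' : Fin m}
    (h1 : i < f i) (h2 : (i' : ℕ) < i) (h3 : (i : ℕ) ≤ (f i' : ℕ)) :
    (f i : ℕ) < (f i' : ℕ) := by
  have hne : f i' ≠ i := by
    intro h
    have : i' = f i := by rw [← hf.1 i', h]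
    rw [this] at h2
    have := Fin.lt_def.mp h1
    omega
  have h3' : (i : ℕ) < (f i' : ℕ) := lt_of_le_of_ne h3 (by
    intro h; exact hne (Fin.ext h.symm))
  by_contra hle
  push_neg at hle
  have hne2 : f i' ≠ f i := fun h => by
    have := f.injective h
    rw [this] at h2; omega
  have hlt : (f i' : ℕ) < (f i : ℕ) :=
    lt_of_le_of_ne hle (fun h => hne2 (Fin.ext h))
  exact hf.2.2 ⟨i', i, Fin.lt_def.mpr h2, Fin.lt_def.mpr h3', Fin.lt_def.mpr hlt⟩

lemma covSet_subset {f : Equiv.Perm (Fin m)} (hf : IsCrossinglessMatching f) {i : Fin m}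
    (h1 : i < f i) {k : ℕ} (hk1 : (i : ℕ) < k) (hk2 : k ≤ (f i : ℕ) + 1) :
    covSet f (i : ℕ) ⊆ covSet f k := by
  intro i' hi'
  rw [mem_covSet] at hi' ⊢
  have hkey := cov_key hf h1 hi'.1 hi'.2
  exact ⟨by omega, by omega⟩

lemma covSet_ssubset {f : Equiv.Perm (Fin m)} (hf : IsCrossinglessMatching f) {i : Fin m}
    (h1 : i < f i) {k : ℕ} (hk1 : (i : ℕ) < k) (hk2 : k ≤ (f i : ℕ)) :
    covSet f (i : ℕ) ⊂ covSet f k := by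
  rw [Finset.ssubset_iff_of_subset (covSet_subset hf h1 hk1 (by omega))]
  exact ⟨i, mem_covSet.mpr ⟨hk1, hk2⟩, fun h => by simp [mem_covSet] at h⟩

lemma covSet_eq {f : Equiv.Perm (Fin m)} (hf : IsCrossinglessMatching f) {i : Fin m}
    (h1 : i < f i) : covSet f ((f i : ℕ) + 1) = covSet f (i : ℕ) := by
  have hlt : (i : ℕ) < (f i : ℕ) := Fin.lt_def.mp h1
  apply Finset.Subset.antisymm
  · intro i' hi'
    rw [mem_covSet] at hi' ⊢
    have hne : i' ≠ f i := by
      intro h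
      have : f i' = i := by rw [h, hf.1]
      omega
    have h2 : (i' : ℕ) < i := by
      by_contra hge
      push_neg at hge
      have hne' : (i : ℕ) ≠ (i' : ℕ) := fun h => by
        have : f i' = f i := by rw [Fin.ext h.symm]
        omega
      have hii' : (i : ℕ) < i' := by omega
      have hi'fi : (i' : ℕ) < (f i : ℕ) := by
        have : (i' : ℕ) ≠ (f i : ℕ) := fun h => hne (Fin.ext h)
        omega
      exact hf.2.2 ⟨i, i', Fin.lt_def.mpr hii', Fin.lt_def.mpr hi'fi,
        Fin.lt_def.mpr (by omega)⟩
    exact ⟨h2, by omega⟩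
  · intro i' hi'
    rw [mem_covSet] at hi' ⊢
    have hkey := cov_key hf h1 hi'.1 hi'.2
    exact ⟨by omega, by omega⟩


lemma card_identity {f : Equiv.Perm (Fin m)} (hf : IsCrossinglessMatching f)
    {p : ℕ} (hp : p ≤ m) :
    2 * (leftEndpoints f ∩ Finset.range p).card = p + (covSet f p).card := by
  classical
  set L := Finset.univ.filter (fun i : Fin m => i < f i ∧ (i : ℕ) < p) with hL
  set R := Finset.univ.filter (fun i : Fin m => f i < i ∧ (i : ℕ) < p) with hR
  set R' := Finset.univ.filter (fun i : Fin m => i < f i ∧ (f i : ℕ) < p) with hR'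
  have cL : (leftEndpoints f ∩ Finset.range p).card = L.card := by
    have himg : leftEndpoints f ∩ Finset.range p = L.image (fun i : Fin m => (i : ℕ)) := by
      ext x
      simp only [leftEndpoints, hL, Finset.mem_inter, Finset.mem_image, Finset.mem_filter,
        Finset.mem_univ, true_and, Finset.mem_range]
      constructor
      · rintro ⟨⟨i, hi, rfl⟩, hx⟩; exact ⟨i, ⟨hi, hx⟩, rfl⟩
      · rintro ⟨i, ⟨hi, hx⟩, rfl⟩; exact ⟨⟨i, hi, rfl⟩, hx⟩
    rw [himg, Finset.card_image_of_injective _ Fin.val_injective]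
  have cR : R.card = R'.card := by
    have himg : R = R'.image (⇑f) := by
      ext j
      simp only [hR, hR', Finset.mem_image, Finset.mem_filter, Finset.mem_univ, true_and]
      constructor
      · rintro ⟨hj1, hj2⟩
        exact ⟨f j, ⟨by rw [hf.1]; exact hj1, by rw [hf.1]; exact hj2⟩, hf.1 j⟩
      · rintro ⟨i, ⟨hi1, hi2⟩, rfl⟩
        exact ⟨by rw [hf.1]; exact hi1, hi2⟩
    rw [himg, Finset.card_image_of_injective _ f.injective]
  have part1 : L.card + R.card = p := by
    have hdisj : Disjoint L R := by
      rw [Finset.disjoint_filter]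
      rintro i _ ⟨h1, _⟩ ⟨h2, _⟩
      exact absurd h2 (not_lt.mpr h1.le)
    have hunion : L ∪ R = Finset.univ.filter (fun i : Fin m => (i : ℕ) < p) := by
      ext i
      simp only [hL, hR, Finset.mem_union, Finset.mem_filter, Finset.mem_univ, true_and]
      constructor
      · rintro (⟨_, h⟩ | ⟨_, h⟩) <;> exact h
      · intro h
        rcases lt_or_gt_of_ne (hf.2.1 i) with hlt | hlt
        · exact Or.inr ⟨hlt, h⟩
        · exact Or.inl ⟨hlt, h⟩
    have hcard : (Finset.univ.filter (fun i : Fin m => (i : ℕ) < p)).card = p := by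
      have himg : (Finset.univ.filter (fun i : Fin m => (i : ℕ) < p)).image
          (fun i : Fin m => (i : ℕ)) = Finset.range p := by
        ext x
        simp only [Finset.mem_image, Finset.mem_filter, Finset.mem_univ, true_and,
          Finset.mem_range]
        constructor
        · rintro ⟨i, hi, rfl⟩; exact hi
        · intro hx; exact ⟨⟨x, lt_of_lt_of_le hx hp⟩, hx, rfl⟩
      calc (Finset.univ.filter (fun i : Fin m => (i : ℕ) < p)).card
          = ((Finset.univ.filter (fun i : Fin m => (i : ℕ) < p)).image
            (fun i : Fin m => (i : ℕ))).card :=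
            (Finset.card_image_of_injective _ Fin.val_injective).symm
        _ = p := by rw [himg, Finset.card_range]
    rw [← Finset.card_union_of_disjoint hdisj, hunion, hcard]
  have part2 : (covSet f p).card + R'.card = L.card := by
    have hdisj : Disjoint (covSet f p) R' := Finset.disjoint_left.mpr (by
      intro i hi hi'
      rw [mem_covSet] at hi
      rw [hR', Finset.mem_filter] at hi'
      omega)
    have hunion : covSet f p ∪ R' = L := by
      ext i
      simp only [hL, hR', Finset.mem_union, mem_covSet, Finset.mem_filter,
        Finset.mem_univ, true_and]
      constructor
      · rintro (⟨h1, h2⟩ | ⟨h1, h2⟩)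
        · exact ⟨Fin.lt_def.mpr (by omega), h1⟩
        · exact ⟨h1, by have := Fin.lt_def.mp h1; omega⟩
      · rintro ⟨h1, h2⟩
        rcases le_or_gt p ((f i : ℕ)) with h | h
        · exact Or.inl ⟨h2, h⟩
        · exact Or.inr ⟨h1, h⟩
    rw [← Finset.card_union_of_disjoint hdisj, hunion]
  omega


/-- The ballot height function of a set `S`. -/
def hgt (S : Finset ℕ) (p : ℕ) : ℤ := 2 * ((S ∩ Finset.range p).card : ℤ) - p

lemma hgt_eq_cov {f : Equiv.Perm (Fin m)} (hf : IsCrossinglessMatching f)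
    {p : ℕ} (hp : p ≤ m) : hgt (leftEndpoints f) p = ((covSet f p).card : ℤ) := by
  have := card_identity hf hp
  unfold hgt
  omega

lemma fi_le {f : Equiv.Perm (Fin m)} (i : Fin m) : (f i : ℕ) < m := (f i).isLt

/-- Characterization of the right endpoint in terms of the height function. -/
lemma char_right {f : Equiv.Perm (Fin m)} (hf : IsCrossinglessMatching f) {i : Fin m}
    (h1 : i < f i) :
    hgt (leftEndpoints f) ((f i : ℕ) + 1) = hgt (leftEndpoints f) (i : ℕ) ∧
    ∀ k, (i : ℕ) < k → k ≤ (f i : ℕ) → hgt (leftEndpoints f) (i : ℕ) < hgt (leftEndpoints f) k := by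
  constructor
  · rw [hgt_eq_cov hf (by have := fi_le (f := f) i; omega),
      hgt_eq_cov hf (le_of_lt i.isLt), covSet_eq hf h1]
  · intro k hk1 hk2
    rw [hgt_eq_cov hf (le_of_lt i.isLt), hgt_eq_cov hf (by have := fi_le (f := f) i; omega)]
    exact_mod_cast Finset.card_lt_card (covSet_ssubset hf h1 hk1 hk2)

/-- Uniqueness of a point satisfying the right-endpoint characterization. -/
lemma char_unique (H : ℕ → ℤ) (i : ℕ) (j1 j2 : ℕ)
    (ha1 : i < j1) (hb1 : H (j1 + 1) = H i) (hc1 : ∀ k, i < k → k ≤ j1 → H i < H k)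
    (ha2 : i < j2) (hb2 : H (j2 + 1) = H i) (hc2 : ∀ k, i < k → k ≤ j2 → H i < H k) :
    j1 = j2 := by
  by_contra hne
  rcases Nat.lt_or_ge j1 j2 with h | h
  · have := hc2 (j1 + 1) (by omega) (by omega)
    omega
  · have := hc1 (j2 + 1) (by omega) (by omega)
    omega

lemma mem_left_iff {f : Equiv.Perm (Fin m)} {i : Fin m} :
    (i : ℕ) ∈ leftEndpoints f ↔ i < f i := by
  rw [mem_leftEndpoints]
  constructor
  · rintro ⟨i', hi', h⟩
    rwa [Fin.val_injective h] at hi'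
  · intro h; exact ⟨i, h, rfl⟩

lemma matching_injective {f f' : Equiv.Perm (Fin m)}
    (hf : IsCrossinglessMatching f) (hf' : IsCrossinglessMatching f')
    (hS : leftEndpoints f = leftEndpoints f') : f = f' := by
  have hLiff : ∀ i : Fin m, i < f i ↔ i < f' i := by
    intro i
    rw [← mem_left_iff (f := f), ← mem_left_iff (f := f'), hS]
  have key : ∀ i : Fin m, i < f i → f i = f' i := by
    intro i hi
    have hi' : i < f' i := (hLiff i).mp hi
    obtain ⟨hb1, hc1⟩ := char_right hf hi
    obtain ⟨hb2, hc2⟩ := char_right hf' hi'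
    rw [hS] at hb1 hc1
    exact Fin.val_injective (char_unique (hgt (leftEndpoints f')) (i : ℕ) _ _
      (Fin.lt_def.mp hi) hb1 hc1 (Fin.lt_def.mp hi') hb2 hc2)
  apply Equiv.ext
  intro i
  rcases lt_or_gt_of_ne (hf.2.1 i) with hlt | hlt
  · -- f i < i, so i is a right endpoint
    set j := f i with hj
    have hfj : f j = i := hf.1 i
    have hjl : j < f j := by rw [hfj]; exact hlt
    have h1 : f' j = i := by rw [← key j hjl, hfj]
    have : f' i = j := by rw [← h1, hf'.1]
    rw [this, hj]
  · exact key i hlt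

/-- The left endpoints of a crossingless matching form a subset of `range m`. -/
lemma left_subset {f : Equiv.Perm (Fin m)} : ↑(leftEndpoints f) ⊆ ↑(Finset.range m) := by
  intro x hx
  obtain ⟨i, _, rfl⟩ := mem_leftEndpoints.mp hx
  exact Finset.mem_range.mpr i.isLt

lemma covSet_top {f : Equiv.Perm (Fin m)} : covSet f m = ∅ := by
  ext i
  simp only [mem_covSet, Finset.notMem_empty, iff_false]
  intro h
  exact absurd h.2 (not_le.mpr (fi_le i))

lemma left_card {n : ℕ} {f : Equiv.Perm (Fin (2*n))} (hf : IsCrossinglessMatching f) :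
    (leftEndpoints f).card = n := by
  have h := card_identity hf (le_refl (2*n))
  rw [covSet_top] at h
  have hsub : leftEndpoints f ∩ Finset.range (2*n) = leftEndpoints f := by
    apply Finset.inter_eq_left.mpr
    intro x hx
    obtain ⟨i, _, rfl⟩ := mem_leftEndpoints.mp hx
    exact Finset.mem_range.mpr i.isLt
  rw [hsub, Finset.card_empty] at h
  omega

lemma left_ballot {n : ℕ} {f : Equiv.Perm (Fin (2*n))} (hf : IsCrossinglessMatching f) :
    ∀ p < 2*n, p + 1 ≤ 2 * ((leftEndpoints f ∩ Finset.range (p+1)).card) := by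
  intro p hp
  have h := card_identity hf (show p + 1 ≤ 2*n by omega)
  omega


lemma hgt_succ_mem (S : Finset ℕ) {p : ℕ} (hp : p ∈ S) : hgt S (p+1) = hgt S p + 1 := by
  have hins : S ∩ Finset.range (p+1) = insert p (S ∩ Finset.range p) := by
    ext x
    simp only [Finset.mem_inter, Finset.mem_range, Finset.mem_insert]
    constructor
    · rintro ⟨h1, h2⟩
      rcases Nat.lt_or_ge x p with h | h
      · exact Or.inr ⟨h1, h⟩
      · exact Or.inl (by omega)
    · rintro (rfl | ⟨h1, h2⟩)
      · exact ⟨hp, by omega⟩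
      · exact ⟨h1, by omega⟩
  have hnm : p ∉ S ∩ Finset.range p := by simp
  unfold hgt
  rw [hins, Finset.card_insert_of_notMem hnm]
  push_cast
  ring

lemma hgt_succ_notMem (S : Finset ℕ) {p : ℕ} (hp : p ∉ S) : hgt S (p+1) = hgt S p - 1 := by
  have hins : S ∩ Finset.range (p+1) = S ∩ Finset.range p := by
    ext x
    simp only [Finset.mem_inter, Finset.mem_range]
    constructor
    · rintro ⟨h1, h2⟩
      refine ⟨h1, ?_⟩
      rcases Nat.lt_or_ge x p with h | h
      · exact h
      · have : x = p := by omega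
        rw [this] at h1; exact absurd h1 hp
    · rintro ⟨h1, h2⟩; exact ⟨h1, by omega⟩
  unfold hgt
  rw [hins]
  push_cast
  ring

lemma hgt_step (S : Finset ℕ) (p : ℕ) :
    hgt S (p+1) = hgt S p + 1 ∨ hgt S (p+1) = hgt S p - 1 := by
  by_cases hp : p ∈ S
  · exact Or.inl (hgt_succ_mem S hp)
  · exact Or.inr (hgt_succ_notMem S hp)

lemma hgt_zero (S : Finset ℕ) : hgt S 0 = 0 := by simp [hgt]

section Construct

variable {n : ℕ} {S : Finset ℕ}

lemma hgt_top (hcard : S.card = n) (hsub : ∀ x ∈ S, x < 2*n) : hgt S (2*n) = 0 := by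
  have : S ∩ Finset.range (2*n) = S := by
    apply Finset.inter_eq_left.mpr
    intro x hx
    exact Finset.mem_range.mpr (hsub x hx)
  unfold hgt
  rw [this, hcard]
  push_cast
  ring

lemma hgt_nonneg (hbal : ∀ p < 2*n, p + 1 ≤ 2 * (S ∩ Finset.range (p+1)).card) :
    ∀ p ≤ 2*n, 0 ≤ hgt S p := by
  intro p hp
  match p with
  | 0 => rw [hgt_zero]
  | q+1 =>
    have := hbal q (by omega)
    unfold hgt
    omega

open Classical in
noncomputable def matchJ (S : Finset ℕ) (i : ℕ) : ℕ :=
  if h : ∃ j, i < j ∧ hgt S (j+1) = hgt S i then Nat.find h else 0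

lemma matchJ_exists (hcard : S.card = n) (hsub : ∀ x ∈ S, x < 2*n)
    (hbal : ∀ p < 2*n, p + 1 ≤ 2 * (S ∩ Finset.range (p+1)).card)
    {i : ℕ} (hi : i ∈ S) :
    ∃ j, i < j ∧ j < 2*n ∧ hgt S (j+1) = hgt S i := by
  have him : i < 2*n := hsub i hi
  have h1 : hgt S (i+1) = hgt S i + 1 := hgt_succ_mem S hi
  obtain ⟨k, hk1, hk2, hk3⟩ := ivt_down (hgt S) (hgt_step S) (2*n - (i+1)) (i+1)
    (hgt S i) (by omega)
    (by rw [show i+1+(2*n-(i+1)) = 2*n by omega, hgt_top hcard hsub]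
        exact hgt_nonneg hbal i (by omega))
  have hk4 : k ≠ i + 1 := fun h => by rw [h] at hk3; omega
  refine ⟨k - 1, by omega, by omega, ?_⟩
  rw [show k - 1 + 1 = k by omega]
  exact hk3

lemma matchJ_spec (hcard : S.card = n) (hsub : ∀ x ∈ S, x < 2*n)
    (hbal : ∀ p < 2*n, p + 1 ≤ 2 * (S ∩ Finset.range (p+1)).card)
    {i : ℕ} (hi : i ∈ S) :
    i < matchJ S i ∧ matchJ S i < 2*n ∧ hgt S (matchJ S i + 1) = hgt S i := by
  classical
  obtain ⟨j, hj1, hj2, hj3⟩ := matchJ_exists hcard hsub hbal hi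
  have hex : ∃ j, i < j ∧ hgt S (j+1) = hgt S i := ⟨j, hj1, hj3⟩
  unfold matchJ
  rw [dif_pos hex]
  have hspec := Nat.find_spec hex
  have hle : Nat.find hex ≤ j := Nat.find_min' hex ⟨hj1, hj3⟩
  exact ⟨hspec.1, by omega, hspec.2⟩

lemma matchJ_min {i : ℕ} (j' : ℕ) (h1 : i < j') (h2 : hgt S (j'+1) = hgt S i) :
    matchJ S i ≤ j' := by
  classical
  have hex : ∃ j, i < j ∧ hgt S (j+1) = hgt S i := ⟨j', h1, h2⟩
  unfold matchJ
  rw [dif_pos hex]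
  exact Nat.find_min' hex ⟨h1, h2⟩

lemma matchJ_above (hcard : S.card = n) (hsub : ∀ x ∈ S, x < 2*n)
    (hbal : ∀ p < 2*n, p + 1 ≤ 2 * (S ∩ Finset.range (p+1)).card)
    {i : ℕ} (hi : i ∈ S) :
    ∀ k, i < k → k ≤ matchJ S i → hgt S i < hgt S k := by
  have main : ∀ k, i + 1 ≤ k → (k ≤ matchJ S i → hgt S i < hgt S k) := by
    intro k hk
    induction k, hk using Nat.le_induction with
    | base =>
      intro _
      rw [hgt_succ_mem S hi]
      omega
    | succ k hk ih =>
      intro hk2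
      have h1 := ih (by omega)
      rcases hgt_step S k with h | h
      · omega
      · by_cases he : hgt S (k+1) = hgt S i
        · have := matchJ_min k (by omega) he
          omega
        · omega
  intro k hk1 hk2
  exact main k (by omega) hk2

lemma matchJ_notMem (hcard : S.card = n) (hsub : ∀ x ∈ S, x < 2*n)
    (hbal : ∀ p < 2*n, p + 1 ≤ 2 * (S ∩ Finset.range (p+1)).card)
    {i : ℕ} (hi : i ∈ S) : matchJ S i ∉ S := by
  obtain ⟨h1, h2, h3⟩ := matchJ_spec hcard hsub hbal hi
  have h4 := matchJ_above hcard hsub hbal hi (matchJ S i) h1 (le_refl _)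
  intro hmem
  have := hgt_succ_mem S hmem
  omega

def matchG (S : Finset ℕ) (j : ℕ) : ℕ :=
  Nat.findGreatest (fun i => hgt S i = hgt S (j+1)) j

lemma matchG_exists (hcard : S.card = n) (hsub : ∀ x ∈ S, x < 2*n)
    (hbal : ∀ p < 2*n, p + 1 ≤ 2 * (S ∩ Finset.range (p+1)).card)
    {j : ℕ} (hj : j ∉ S) (hjm : j < 2*n) :
    ∃ i, i ≤ j ∧ hgt S i = hgt S (j+1) := by
  have ht : 0 ≤ hgt S (j+1) := hgt_nonneg hbal (j+1) (by omega)
  have hjj : hgt S j = hgt S (j+1) + 1 := by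
    have := hgt_succ_notMem S hj
    omega
  obtain ⟨k, hk1, hk2, hk3⟩ := ivt_up (hgt S) (hgt_step S) j 0 (hgt S (j+1))
    (by rw [hgt_zero]; exact ht) (by rw [Nat.zero_add]; omega)
  exact ⟨k, by omega, hk3⟩

lemma matchG_spec (hcard : S.card = n) (hsub : ∀ x ∈ S, x < 2*n)
    (hbal : ∀ p < 2*n, p + 1 ≤ 2 * (S ∩ Finset.range (p+1)).card)
    {j : ℕ} (hj : j ∉ S) (hjm : j < 2*n) :
    matchG S j < j ∧ hgt S (matchG S j) = hgt S (j+1) := by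
  classical
  obtain ⟨i, hi1, hi2⟩ := matchG_exists hcard hsub hbal hj hjm
  have hspec : hgt S (matchG S j) = hgt S (j+1) :=
    Nat.findGreatest_spec (P := fun i => hgt S i = hgt S (j+1)) hi1 hi2
  have hle : matchG S j ≤ j := Nat.findGreatest_le j
  have hne : matchG S j ≠ j := by
    intro h
    rw [h] at hspec
    have := hgt_succ_notMem S hj
    omega
  exact ⟨by omega, hspec⟩

lemma matchG_above (hcard : S.card = n) (hsub : ∀ x ∈ S, x < 2*n)
    (hbal : ∀ p < 2*n, p + 1 ≤ 2 * (S ∩ Finset.range (p+1)).card)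
    {j : ℕ} (hj : j ∉ S) (hjm : j < 2*n) :
    ∀ k, matchG S j < k → k ≤ j → hgt S (j+1) < hgt S k := by
  classical
  have main : ∀ d k, k + d = j → matchG S j < k → hgt S (j+1) < hgt S k := by
    intro d
    induction d with
    | zero =>
      intro k hk _
      rw [Nat.add_zero] at hk
      subst hk
      have := hgt_succ_notMem S hj
      omega
    | succ d ih =>
      intro k hk hG
      have h1 := ih (k+1) (by omega) (by omega)
      have hnP : ¬ (hgt S k = hgt S (j+1)) :=
        Nat.findGreatest_is_greatest hG (by omega)
      rcases hgt_step S k with h | h <;> omega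
  intro k hk1 hk2
  exact main (j - k) k (by omega) hk1

lemma matchG_mem (hcard : S.card = n) (hsub : ∀ x ∈ S, x < 2*n)
    (hbal : ∀ p < 2*n, p + 1 ≤ 2 * (S ∩ Finset.range (p+1)).card)
    {j : ℕ} (hj : j ∉ S) (hjm : j < 2*n) : matchG S j ∈ S := by
  obtain ⟨h1, h2⟩ := matchG_spec hcard hsub hbal hj hjm
  have h3 := matchG_above hcard hsub hbal hj hjm (matchG S j + 1) (by omega) (by omega)
  by_contra hmem
  have := hgt_succ_notMem S hmem
  omega

lemma matchG_matchJ (hcard : S.card = n) (hsub : ∀ x ∈ S, x < 2*n)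
    (hbal : ∀ p < 2*n, p + 1 ≤ 2 * (S ∩ Finset.range (p+1)).card)
    {i : ℕ} (hi : i ∈ S) : matchG S (matchJ S i) = i := by
  classical
  obtain ⟨h1, h2, h3⟩ := matchJ_spec hcard hsub hbal hi
  have hjn := matchJ_notMem hcard hsub hbal hi
  obtain ⟨g1, g2⟩ := matchG_spec hcard hsub hbal hjn h2
  have hge : i ≤ matchG S (matchJ S i) :=
    Nat.le_findGreatest (by omega) (by omega)
  by_contra hne
  have hlt : i < matchG S (matchJ S i) := by omega
  have := matchJ_above hcard hsub hbal hi (matchG S (matchJ S i)) hlt (by omega)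
  omega

lemma matchJ_matchG (hcard : S.card = n) (hsub : ∀ x ∈ S, x < 2*n)
    (hbal : ∀ p < 2*n, p + 1 ≤ 2 * (S ∩ Finset.range (p+1)).card)
    {j : ℕ} (hj : j ∉ S) (hjm : j < 2*n) : matchJ S (matchG S j) = j := by
  obtain ⟨g1, g2⟩ := matchG_spec hcard hsub hbal hj hjm
  have hgm := matchG_mem hcard hsub hbal hj hjm
  have hle : matchJ S (matchG S j) ≤ j := matchJ_min j g1 g2.symm
  obtain ⟨j1, j2, j3⟩ := matchJ_spec hcard hsub hbal hgm
  by_contra hne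
  have hlt : matchJ S (matchG S j) < j := by omega
  have := matchG_above hcard hsub hbal hj hjm (matchJ S (matchG S j) + 1)
    (by omega) (by omega)
  omega

lemma matchG_le (S : Finset ℕ) (j : ℕ) : matchG S j ≤ j := Nat.findGreatest_le j

noncomputable def matchF (n : ℕ) (S : Finset ℕ)
    (hJ : ∀ x : Fin (2*n), (x : ℕ) ∈ S → matchJ S x < 2*n) :
    Fin (2*n) → Fin (2*n) := fun x =>
  if hx : (x : ℕ) ∈ S then ⟨matchJ S x, hJ x hx⟩
  else ⟨matchG S x, lt_of_le_of_lt (matchG_le S x) x.isLt⟩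

lemma matchF_pos {n : ℕ} {S : Finset ℕ} {hJ} {x : Fin (2*n)} (hx : (x : ℕ) ∈ S) :
    (matchF n S hJ x : ℕ) = matchJ S x := by simp [matchF, hx]

lemma matchF_neg {n : ℕ} {S : Finset ℕ} {hJ} {x : Fin (2*n)} (hx : (x : ℕ) ∉ S) :
    (matchF n S hJ x : ℕ) = matchG S x := by simp [matchF, hx]

lemma exists_matching (hcard : S.card = n) (hsub : ∀ x ∈ S, x < 2*n)
    (hbal : ∀ p < 2*n, p + 1 ≤ 2 * (S ∩ Finset.range (p+1)).card) :
    ∃ f : Equiv.Perm (Fin (2*n)), IsCrossinglessMatching f ∧ leftEndpoints f = S := by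
  classical
  have hJ : ∀ x : Fin (2*n), (x : ℕ) ∈ S → matchJ S x < 2*n := fun x hx =>
    (matchJ_spec hcard hsub hbal hx).2.1
  have hinv : Function.Involutive (matchF n S hJ) := by
    intro x
    by_cases hx : (x : ℕ) ∈ S
    · have h1 : ((matchF n S hJ) x : ℕ) = matchJ S x := matchF_pos hx
      have h2 : ((matchF n S hJ) x : ℕ) ∉ S := by rw [h1]; exact matchJ_notMem hcard hsub hbal hx
      apply Fin.ext
      rw [matchF_neg h2, h1]
      exact matchG_matchJ hcard hsub hbal hx
    · have h1 : ((matchF n S hJ) x : ℕ) = matchG S x := matchF_neg hx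
      have h2 : ((matchF n S hJ) x : ℕ) ∈ S := by
        rw [h1]; exact matchG_mem hcard hsub hbal hx x.isLt
      apply Fin.ext
      rw [matchF_pos h2, h1]
      exact matchJ_matchG hcard hsub hbal hx x.isLt
  refine ⟨hinv.toPerm, ⟨?_, ?_, ?_⟩, ?_⟩
  · intro i
    rw [Function.Involutive.coe_toPerm]
    exact hinv i
  · intro i
    rw [Function.Involutive.coe_toPerm]
    by_cases hx : (i : ℕ) ∈ S
    · have := (matchJ_spec hcard hsub hbal hx).1
      intro h
      have := matchF_pos (hJ := hJ) hx
      rw [h] at this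
      omega
    · have := (matchG_spec hcard hsub hbal hx i.isLt).1
      intro h
      have := matchF_neg (hJ := hJ) hx
      rw [h] at this
      omega
  · rintro ⟨i, j, hij, hjfi, hfifj⟩
    rw [Function.Involutive.coe_toPerm] at hjfi hfifj
    rw [Fin.lt_def] at hij hjfi hfifj
    have hiS : (i : ℕ) ∈ S := by
      by_contra hx
      have h1 := matchF_neg (hJ := hJ) hx
      have h2 := (matchG_spec hcard hsub hbal hx i.isLt).1
      omega
    have hFi : ((matchF n S hJ) i : ℕ) = matchJ S i := matchF_pos hiS
    have hjS : (j : ℕ) ∈ S := by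
      by_contra hx
      have h1 := matchF_neg (hJ := hJ) hx
      have h2 := (matchG_spec hcard hsub hbal hx j.isLt).1
      omega
    have hFj : ((matchF n S hJ) j : ℕ) = matchJ S j := matchF_pos hjS
    rw [hFi] at hjfi
    rw [hFi, hFj] at hfifj
    have h1 : hgt S i < hgt S j :=
      matchJ_above hcard hsub hbal hiS j hij (by omega)
    have h2 : hgt S (matchJ S i + 1) = hgt S i := (matchJ_spec hcard hsub hbal hiS).2.2
    have h3 : hgt S j < hgt S (matchJ S i + 1) :=
      matchJ_above hcard hsub hbal hjS (matchJ S i + 1) (by omega) (by omega)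
    omega
  · ext x
    rw [mem_leftEndpoints]
    constructor
    · rintro ⟨i, hi, rfl⟩
      rw [Function.Involutive.coe_toPerm, Fin.lt_def] at hi
      by_contra hx
      have h1 := matchF_neg (hJ := hJ) hx
      have h2 := (matchG_spec hcard hsub hbal hx i.isLt).1
      omega
    · intro hx
      have hxm : x < 2*n := hsub x hx
      refine ⟨⟨x, hxm⟩, ?_, rfl⟩
      rw [Function.Involutive.coe_toPerm, Fin.lt_def]
      have h1 : ((⟨x, hxm⟩ : Fin (2*n)) : ℕ) ∈ S := hx
      rw [matchF_pos h1]
      exact (matchJ_spec hcard hsub hbal h1).1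

end Construct

end Stmt8Aux

/-- the left-endpoint map is a bijection from crossingless matchings of `2n`
points onto the `n`-element subsets of `{0,…,2n−1}` satisfying the ballot condition. -/
theorem stmt8 (n : ℕ) (hn : 1 ≤ n) :
    Set.InjOn (fun f : Equiv.Perm (Fin (2 * n)) => leftEndpoints f)
        {f | IsCrossinglessMatching f} ∧
    (fun f : Equiv.Perm (Fin (2 * n)) => leftEndpoints f) '' {f | IsCrossinglessMatching f} =
      {S : Finset ℕ | S.card = n ∧ ↑S ⊆ Finset.range (2 * n) ∧
        ∀ p < 2 * n, p + 1 ≤ 2 * (S ∩ Finset.range (p + 1)).card} := by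
  constructor
  · intro f hf g hg h
    exact Stmt8Aux.matching_injective hf hg h
  · ext S
    simp only [Set.mem_image, Set.mem_setOf_eq]
    constructor
    · rintro ⟨f, hf, rfl⟩
      exact ⟨Stmt8Aux.left_card hf, Stmt8Aux.left_subset, Stmt8Aux.left_ballot hf⟩
    · rintro ⟨h1, h2, h3⟩
      have hsub : ∀ x ∈ S, x < 2*n := fun x hx =>
        Finset.mem_range.mp (h2 (Finset.mem_coe.mpr hx))
      obtain ⟨f, hf1, hf2⟩ := Stmt8Aux.exists_matching h1 hsub h3
      exact ⟨f, hf1, hf2⟩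
end

section
/- Let λ be a partition, let (α, β) be a φ_λ-pair and let (α′, β′) be a parent of (α, β). Define ψ : ℤ → {+,−} by ψ(α) = +, ψ(β) = −, and ψ(γ) = φ_λ(γ) for all γ ≠ α, β. Then (α′, α) and (β, β′) are ψ-pairs, and β′ − β is odd. -/
/-- `ε(+) = 1`, `ε(−) = −1`, encoding `+` as `true` and `−` as `false`. -/
def eps (b : Bool) : ℤ := if b then 1 else -1

/-- `(α, β)` is a `φ`-pair: `α < β`, `φ α = −`, `φ β = +`, the signs sum to zero over
`[α, β]`, and `β` is minimal with these properties. -/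
def IsPhiPair (φ : ℤ → Bool) (α β : ℤ) : Prop :=
  α < β ∧ φ α = false ∧ φ β = true ∧ (∑ γ ∈ Finset.Icc α β, eps (φ γ)) = 0 ∧
    ∀ β₀ : ℤ, α < β₀ → β₀ < β → φ β₀ = true →
      (∑ γ ∈ Finset.Icc α β₀, eps (φ γ)) ≠ 0

/-- `(α', β')` is a parent of the `φ`-pair `(α, β)`. -/
def IsParent (φ : ℤ → Bool) (α' β' α β : ℤ) : Prop :=
  IsPhiPair φ α' β' ∧ α' < α ∧ β < β' ∧
    ¬∃ α'' β'' : ℤ, IsPhiPair φ α'' β'' ∧ α'' < α ∧ β < β'' ∧ α' < α'' ∧ β'' < β'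

/-!
Read `c ↦ ∑_{γ ∈ [α', c]} ε(φ γ)` as a lattice path with steps `±1`. A `φ`-pair `(a, b)` is a
down-step at `a` followed by the first return of the path to the height it had before `a`.
Along the parent pair `(α', β')` the path stays negative; if it were at height `≤ -2` just
before `α`, it would stay there throughout `[α - 1, β]` (the child pair only goes below its
starting height), and the last down-step from `-1` before `α` together with the next return
to `-1` would be a pair strictly between `(α', β')` and `(α, β)`. So the path is at `-1` both
before `α` and at `β`. Swapping the signs at `α` and `β` then makes it return to `0` at `α`,
and makes the path started at `β` coincide with the old one on `[β, β']`. The parity claim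
holds because a vanishing sum of `±1`s has an even number of terms.
-/

section DiscreteIVT

variable {f : ℤ → ℤ} {k : ℤ}

theorem Int.exists_first_eq_of_lt_of_le (hf : ∀ n, |f (n + 1) - f n| ≤ 1) {d e : ℤ}
    (hd : f d < k) (he : k ≤ f e) (hde : d ≤ e) :
    ∃ b, d < b ∧ b ≤ e ∧ f b = k ∧ ∀ γ, d ≤ γ → γ < b → f γ < k := by
  obtain ⟨b, ⟨hdb, hbe, hkb⟩, hleast⟩ := Int.exists_least_of_bdd
    (P := fun z => d < z ∧ z ≤ e ∧ k ≤ f z) ⟨d, fun z hz => hz.1.le⟩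
    ⟨e, lt_of_le_of_ne hde (by rintro rfl; omega), le_rfl, he⟩
  have hbelow : ∀ γ, d ≤ γ → γ < b → f γ < k := by
    intro γ hdγ hγb
    rcases hdγ.eq_or_lt with rfl | hdγ
    · exact hd
    · by_contra! hkγ
      exact absurd (hleast γ ⟨hdγ, by omega, hkγ⟩) (by omega)
  have hstep := (abs_le.1 (hf (b - 1))).2
  rw [sub_add_cancel] at hstep
  exact ⟨b, hdb, hbe, by linarith [hbelow (b - 1) (by omega) (by omega)], hbelow⟩

theorem Int.exists_last_eq_of_lt_of_le (hf : ∀ n, |f (n + 1) - f n| ≤ 1) {a c : ℤ}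
    (hc : f c < k) (ha : k ≤ f a) (hac : a ≤ c) :
    ∃ a₀, a ≤ a₀ ∧ a₀ < c ∧ f a₀ = k ∧ ∀ γ, a₀ < γ → γ ≤ c → f γ < k := by
  have hf' : ∀ n, |f (-(n + 1)) - f (-n)| ≤ 1 := fun n => by
    rw [abs_sub_comm, show -n = -(n + 1) + 1 by ring]
    exact hf _
  obtain ⟨b, hcb, hba, hfb, hbelow⟩ :=
    Int.exists_first_eq_of_lt_of_le (f := fun n => f (-n)) hf'
      (d := -c) (e := -a) (by simpa using hc) (by simpa using ha) (by omega)
  exact ⟨-b, by omega, by omega, hfb, fun γ h₁ h₂ => by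
    simpa using hbelow (-γ) (by omega) (by omega)⟩

end DiscreteIVT

@[simp] theorem eps_true : eps true = 1 := rfl

@[simp] theorem eps_false : eps false = -1 := rfl

theorem abs_eps (s : Bool) : |eps s| = 1 := by
  cases s <;> rfl

noncomputable def signSum (φ : ℤ → Bool) (a c : ℤ) : ℤ := ∑ γ ∈ Finset.Icc a c, eps (φ γ)

section SignSum

variable {φ ψ : ℤ → Bool} {a b c : ℤ}

theorem signSum_of_lt (h : c < a) : signSum φ a c = 0 := by
  rw [signSum, Finset.Icc_eq_empty_of_lt h, Finset.sum_empty]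

theorem signSum_self : signSum φ a a = eps (φ a) := by
  rw [signSum, Finset.Icc_self, Finset.sum_singleton]

theorem signSum_split (hab : a ≤ b + 1) (hbc : b ≤ c) :
    signSum φ a c = signSum φ a b + signSum φ (b + 1) c := by
  rw [signSum, signSum, signSum, ← Finset.sum_union]
  · congr 1
    ext x
    simp only [Finset.mem_union, Finset.mem_Icc]
    omega
  · simp only [Finset.disjoint_left, Finset.mem_Icc]
    omega

theorem signSum_succ (h : a ≤ c + 1) : signSum φ a (c + 1) = signSum φ a c + eps (φ (c + 1)) := by
  rw [signSum_split h (by omega), signSum_self]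

theorem abs_signSum_succ_sub_le (c : ℤ) : |signSum φ a (c + 1) - signSum φ a c| ≤ 1 := by
  rcases le_or_gt a (c + 1) with h | h
  · rw [signSum_succ h, add_sub_cancel_left, abs_eps]
  · rw [signSum_of_lt h, signSum_of_lt (by omega), sub_zero, abs_zero]
    exact zero_le_one

theorem signSum_congr (h : ∀ γ, a ≤ γ → γ ≤ c → φ γ = ψ γ) : signSum φ a c = signSum ψ a c :=
  Finset.sum_congr rfl fun γ hγ => by
    rw [h γ (Finset.mem_Icc.1 hγ).1 (Finset.mem_Icc.1 hγ).2]

theorem even_signSum_iff (h : a ≤ c + 1) : Even (signSum φ a c) ↔ Even (c + 1 - a) := by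
  induction c, (show a - 1 ≤ c by omega) using Int.leInduction with
  | base => simp [signSum_of_lt (show a - 1 < a by omega)]
  | succ c hc ih =>
    have heps : ¬Even (eps (φ (c + 1))) := by cases φ (c + 1) <;> decide
    rw [signSum_succ (by omega), Int.even_add, ih (by omega),
      show c + 1 + 1 - a = c + 1 - a + 1 by ring, Int.even_add_one]
    tauto

end SignSum

section PhiPair

variable {φ : ℤ → Bool} {a b : ℤ}

theorem IsPhiPair.signSum_eq_zero (h : IsPhiPair φ a b) : signSum φ a b = 0 :=
  h.2.2.2.1

theorem IsPhiPair.signSum_neg (h : IsPhiPair φ a b) {c : ℤ} (hac : a ≤ c) (hcb : c < b) :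
    signSum φ a c < 0 := by
  obtain ⟨-, hφa, -, -, hmin⟩ := h
  induction c, hac using Int.leInduction with
  | base => rw [signSum_self, hφa, eps_false]; omega
  | succ c hac ih =>
    rw [signSum_succ (by omega)]
    have hprev := ih (by omega)
    cases hφ : φ (c + 1)
    · rw [eps_false]
      omega
    · have hne := hmin (c + 1) (by omega) hcb hφ
      rw [← signSum, signSum_succ (by omega), hφ, eps_true] at hne
      rw [eps_true]
      omega

theorem isPhiPair_iff :
    IsPhiPair φ a b ↔ a < b ∧ signSum φ a b = 0 ∧ ∀ c, a ≤ c → c < b → signSum φ a c < 0 := by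
  refine ⟨fun h => ⟨h.1, h.signSum_eq_zero, fun c => h.signSum_neg⟩, ?_⟩
  rintro ⟨hab, hzero, hneg⟩
  refine ⟨hab, ?_, ?_, hzero, fun c hac hcb _ => (hneg c hac.le hcb).ne⟩
  · have hfirst := hneg a le_rfl hab
    rw [signSum_self] at hfirst
    cases hφ : φ a
    · rfl
    · rw [hφ, eps_true] at hfirst
      omega
  · have hlast := hneg (b - 1) (by omega) (by omega)
    have hstep := signSum_succ (φ := φ) (show a ≤ b - 1 + 1 by omega)
    rw [sub_add_cancel] at hstep
    cases hφ : φ b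
    · rw [hφ, eps_false] at hstep
      omega
    · rfl

theorem IsPhiPair.signSum_nonpos (h : IsPhiPair φ a b) {c : ℤ} (hcb : c ≤ b) :
    signSum φ a c ≤ 0 := by
  rcases lt_or_ge c a with hca | hac
  · exact (signSum_of_lt hca).le
  rcases hcb.lt_or_eq with hcb | rfl
  · exact (h.signSum_neg hac hcb).le
  · exact h.signSum_eq_zero.le

theorem IsPhiPair.odd_sub (h : IsPhiPair φ a b) : Odd (b - a) := by
  have hlength : Even (b + 1 - a) := by
    rw [← even_signSum_iff (φ := φ) (by linarith [h.1]), h.signSum_eq_zero]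
    exact Even.zero
  rw [show b - a = b + 1 - a - 1 by ring]
  exact hlength.sub_odd odd_one

end PhiPair

theorem IsPhiPair.exists_isPhiPair_between {φ : ℤ → Bool} {a' b' c d : ℤ}
    (h : IsPhiPair φ a' b') (ha'c : a' ≤ c) (hcd : c ≤ d) (hdb' : d < b')
    (hdeep : ∀ γ, c ≤ γ → γ ≤ d → signSum φ a' γ ≤ -2) :
    ∃ a b, IsPhiPair φ a b ∧ a' < a ∧ a ≤ c ∧ d < b ∧ b < b' := by
  have hstart : signSum φ a' (a' - 1) = 0 := signSum_of_lt (by omega)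
  have hend := h.signSum_eq_zero
  obtain ⟨a₀, ha'a₀, ha₀c, hfa₀, hleft⟩ :=
    Int.exists_last_eq_of_lt_of_le (f := signSum φ a') abs_signSum_succ_sub_le (k := -1)
      (by linarith [hdeep c le_rfl hcd]) (by omega) (show a' - 1 ≤ c by omega)
  obtain ⟨b, hdb, hbb', hfb, hright⟩ :=
    Int.exists_first_eq_of_lt_of_le (f := signSum φ a') abs_signSum_succ_sub_le (k := -1)
      (by linarith [hdeep d hcd le_rfl]) (by omega) hdb'.le
  have ha₀ : a' - 1 < a₀ := lt_of_le_of_ne ha'a₀ (by rintro rfl; omega)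
  have hb : b < b' := lt_of_le_of_ne hbb' (by rintro rfl; omega)
  have hshift : ∀ γ, a₀ ≤ γ → signSum φ (a₀ + 1) γ = signSum φ a' γ + 1 := fun γ hγ => by
    rw [signSum_split (show a' ≤ a₀ + 1 by omega) hγ, hfa₀]
    ring
  refine ⟨a₀ + 1, b, isPhiPair_iff.2 ⟨by omega, ?_, fun γ h₁ h₂ => ?_⟩, by omega, by omega, hdb, hb⟩
  · rw [hshift b (by omega), hfb]
    rfl
  · rw [hshift γ (by omega)]
    rcases le_or_gt γ c with hγc | hγc
    · linarith [hleft γ (by omega) hγc]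
    rcases le_or_gt γ d with hγd | hγd
    · linarith [hdeep γ hγc.le hγd]
    · linarith [hright γ hγd.le h₂]

section Parent

variable {φ : ℤ → Bool} {α β α' β' : ℤ}

theorem IsParent.signSum_pred_eq_neg_one (hpair : IsPhiPair φ α β)
    (hparent : IsParent φ α' β' α β) : signSum φ α' (α - 1) = -1 := by
  obtain ⟨hpair', hα'α, hββ', hnone⟩ := hparent
  have hαβ := hpair.1
  have hneg := hpair'.signSum_neg (show α' ≤ α - 1 by omega) (by omega)
  by_contra hne
  have hdeep : ∀ γ, α - 1 ≤ γ → γ ≤ β → signSum φ α' γ ≤ -2 := fun γ h₁ h₂ => by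
    rw [signSum_split (show α' ≤ α - 1 + 1 by omega) h₁, sub_add_cancel]
    linarith [hpair.signSum_nonpos h₂, show signSum φ α' (α - 1) ≤ -2 by omega]
  obtain ⟨a, b, hab, ha'a, haα, hβb, hbb'⟩ :=
    hpair'.exists_isPhiPair_between (by omega) (by omega) hββ' hdeep
  exact hnone ⟨a, b, hab, by omega, hβb, ha'a, hbb'⟩

theorem IsParent.signSum_eq_neg_one (hpair : IsPhiPair φ α β)
    (hparent : IsParent φ α' β' α β) : signSum φ α' β = -1 := by
  have hα'α := hparent.2.1
  have hαβ := hpair.1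
  rw [signSum_split (show α' ≤ α - 1 + 1 by omega) (show α - 1 ≤ β by omega), sub_add_cancel,
    hparent.signSum_pred_eq_neg_one hpair, hpair.signSum_eq_zero, add_zero]

theorem IsParent.isPhiPair_left {ψ : ℤ → Bool} (hpair : IsPhiPair φ α β)
    (hparent : IsParent φ α' β' α β) (hψα : ψ α = true) (hψ : ∀ γ, γ < α → ψ γ = φ γ) :
    IsPhiPair ψ α' α := by
  have hbefore := hparent.signSum_pred_eq_neg_one hpair
  have hαβ := hpair.1
  obtain ⟨hpair', hα'α, hββ', -⟩ := hparent
  have hagree : ∀ γ, γ < α → signSum ψ α' γ = signSum φ α' γ := fun γ hγ =>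
    signSum_congr fun δ _ hδ => hψ δ (by omega)
  refine isPhiPair_iff.2 ⟨hα'α, ?_, fun γ h₁ h₂ => ?_⟩
  · rw [← sub_add_cancel α 1, signSum_succ (by omega), sub_add_cancel, hagree _ (by omega),
      hbefore, hψα, eps_true, neg_add_cancel]
  · rw [hagree γ h₂]
    exact hpair'.signSum_neg h₁ (by omega)

theorem IsParent.isPhiPair_right {ψ : ℤ → Bool} (hpair : IsPhiPair φ α β)
    (hparent : IsParent φ α' β' α β) (hψβ : ψ β = false) (hψ : ∀ γ, β < γ → ψ γ = φ γ) :
    IsPhiPair ψ β β' := by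
  have hat := hparent.signSum_eq_neg_one hpair
  have hαβ := hpair.1
  obtain ⟨hpair', hα'α, hββ', -⟩ := hparent
  have hagree : ∀ γ, β ≤ γ → signSum ψ β γ = signSum φ α' γ := fun γ hγ => by
    rw [signSum_split (by omega) hγ, signSum_self, hψβ,
      signSum_congr fun δ hδ _ => hψ δ (by omega),
      signSum_split (show α' ≤ β + 1 by omega) hγ, hat, eps_false]
  refine isPhiPair_iff.2 ⟨hββ', ?_, fun γ h₁ h₂ => ?_⟩
  · rw [hagree β' hββ'.le, hpair'.signSum_eq_zero]
  · rw [hagree γ h₁]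
    exact hpair'.signSum_neg (by omega) h₂

end Parent

theorem stmt10_general
    (φ : ℤ → Bool)
    (α β α' β' : ℤ)
    (hpair : IsPhiPair φ α β) (hparent : IsParent φ α' β' α β)
    (ψ : ℤ → Bool) (hψα : ψ α = true) (hψβ : ψ β = false)
    (hψ : ∀ γ : ℤ, γ ≠ α → γ ≠ β → ψ γ = φ γ) :
    IsPhiPair ψ α' α ∧ IsPhiPair ψ β β' ∧ Odd (β' - β) := by
  have hαβ := hpair.1
  have hright := hparent.isPhiPair_right hpair hψβ fun γ hγ => hψ γ (by omega) hγ.ne'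
  exact ⟨hparent.isPhiPair_left hpair hψα fun γ hγ => hψ γ hγ.ne (by omega), hright,
    hright.odd_sub⟩

/-- if `(α', β')` is a parent of the `φ_λ`-pair `(α, β)` and `ψ` is obtained
from `φ_λ` by swapping the signs at `α` and `β`, then `(α', α)` and `(β, β')` are `ψ`-pairs
and `β' − β` is odd. -/
theorem stmt10 (lam : ℕ → ℕ)
    (hanti : ∀ i j : ℕ, 1 ≤ i → i ≤ j → lam j ≤ lam i)
    (hzero : ∃ N : ℕ, ∀ i, N ≤ i → lam i = 0)
    (φ : ℤ → Bool)
    (hφ : ∀ γ : ℤ, φ γ = false ↔ ∃ i : ℕ, 1 ≤ i ∧ γ = (lam i : ℤ) - (i : ℤ))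
    (α β α' β' : ℤ)
    (hpair : IsPhiPair φ α β) (hparent : IsParent φ α' β' α β)
    (ψ : ℤ → Bool) (hψα : ψ α = true) (hψβ : ψ β = false)
    (hψ : ∀ γ : ℤ, γ ≠ α → γ ≠ β → ψ γ = φ γ) :
    IsPhiPair ψ α' α ∧ IsPhiPair ψ β β' ∧ Odd (β' - β) :=
  stmt10_general φ α β α' β' hpair hparent ψ hψα hψβ hψ
end

section
/- Let A be an associative unital ℚ-algebra, let p, q ∈ A and let N ≥ 1 be an integer with (qp)^N = 0. Set p̃ = Σ_{k=0}^{N−1} c_k · p(qp)^k and q̃ = Σ_{l=0}^{N−1} c_l · (qp)^l q. Then p̃ q̃ = Σ_{k=1}^{2N} ((−1)^{k+1}/k) · (pq)^k and q̃ p̃ = Σ_{k=1}^{2N} ((−1)^{k+1}/k) · (qp)^k; that is, p̃ q̃ = log(1 + pq) and q̃ p̃ = log(1 + qp), where the logarithm of a unipotent element 1 + x with x nilpotent is the finite sum Σ_{k ≥ 1} ((−1)^{k+1}/k) x^k. -/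
/-!
The recursion for `c_k` says exactly that `f = Σ c_k X^k` satisfies `f² = Σ (-1)^m X^m / (m+1)`,
i.e. `X f² = log (1 + X)`. Writing `f_N` for the truncation of `f` below degree `N`, we have
`p̃ = p f_N(qp)` and `q̃ = f_N(qp) q`, and `p f_N(qp) = f_N(pq) p`, so `p̃ q̃ = f_N(pq)² pq` and
`q̃ p̃ = f_N(qp)² qp`. Since `(pq)^(N+1) = (qp)^(N+1) = 0`, only the coefficients of `f_N²` below
degree `N` matter, and these agree with those of `f²`.
-/

/-- The sequence `c_0 = 1`, `c_k = ½((−1)^k/(k+1) − Σ_{l+m=k, 0<l,m<k} c_l c_m)`. -/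
def braidC : ℕ → ℚ
  | 0 => 1
  | (k + 1) =>
      (1 / 2) * ((-1) ^ (k + 1) / (k + 2) -
        ∑ l ∈ (Finset.Icc 1 k).attach, braidC l.1 * braidC (k + 1 - l.1))
  termination_by k => k
  decreasing_by
  · have := l.2; simp only [Finset.mem_Icc] at this; omega
  · have := l.2; simp only [Finset.mem_Icc] at this; omega

open Finset Polynomial
open scoped PowerSeries

theorem SemiconjBy.aeval {R A : Type*} [CommSemiring R] [Semiring A] [Algebra R A]
    {a x y : A} (h : SemiconjBy a x y) (P : R[X]) :
    SemiconjBy a (aeval x P) (aeval y P) := by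
  induction P using Polynomial.induction_on' with
  | add P Q hP hQ => simpa only [map_add] using hP.add_right hQ
  | monomial n r =>
    simpa only [aeval_monomial] using
      SemiconjBy.mul_right (Algebra.commutes r a).symm (h.pow_right n)

theorem Polynomial.aeval_mul_eq_sum_range_of_pow_mul_eq_zero {R A : Type*} [CommSemiring R]
    [Semiring A] [Algebra R A] (P : R[X]) {z w : A} {N : ℕ} (h : z ^ N * w = 0) :
    aeval z P * w = ∑ m ∈ range N, P.coeff m • z ^ m * w := by
  rw [aeval_eq_sum_range' (n := P.natDegree + N + 1) (by omega), sum_mul]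
  refine (sum_subset (range_subset_range.2 (by omega)) fun m _ hm => ?_).symm
  obtain ⟨k, rfl⟩ := Nat.exists_eq_add_of_le' (not_lt.1 (mem_range.not.1 hm))
  rw [smul_mul_assoc, pow_add, mul_assoc, h, mul_zero, smul_zero]

theorem sum_antidiagonal_braidC_mul_braidC (m : ℕ) :
    ∑ ij ∈ antidiagonal m, braidC ij.1 * braidC ij.2 = (-1) ^ m / (m + 1) := by
  rw [Nat.sum_antidiagonal_eq_sum_range_succ_mk]
  cases m with
  | zero => simp [braidC]
  | succ k =>
    have hmiddle : ∑ l ∈ range k, braidC (l + 1) * braidC (k + 1 - (l + 1)) =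
        ∑ l ∈ (Icc 1 k).attach, braidC l.1 * braidC (k + 1 - l.1) := by
      rw [sum_attach (Icc 1 k) fun l => braidC l * braidC (k + 1 - l),
        ← Ico_add_one_right_eq_Icc, sum_Ico_eq_sum_range]
      simp [add_comm]
    rw [sum_range_succ, sum_range_succ', hmiddle, braidC.eq_def (k + 1)]
    simp only [braidC, Nat.sub_zero, Nat.sub_self]
    push_cast
    ring

noncomputable def braidSeries : ℚ⟦X⟧ := PowerSeries.mk braidC

theorem braidSeries_sq :
    braidSeries ^ 2 = PowerSeries.mk fun m : ℕ => ((-1) ^ m / (m + 1) : ℚ) := by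
  ext m
  rw [sq, PowerSeries.coeff_mul, PowerSeries.coeff_mk]
  simp only [braidSeries, PowerSeries.coeff_mk, sum_antidiagonal_braidC_mul_braidC]

theorem aeval_trunc_braidSeries {A : Type*} [Semiring A] [Algebra ℚ A] (N : ℕ) (z : A) :
    aeval z (PowerSeries.trunc N braidSeries) = ∑ k ∈ range N, braidC k • z ^ k := by
  simp only [aeval_def, PowerSeries.eval₂_trunc_eq_sum_range, braidSeries, PowerSeries.coeff_mk,
    Algebra.smul_def]

theorem coeff_trunc_braidSeries_sq {N m : ℕ} (hm : m < N) :
    ((PowerSeries.trunc N braidSeries) ^ 2).coeff m = (-1) ^ m / (m + 1) := by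
  rw [← coeff_coe, Polynomial.coe_pow, sq,
    ← PowerSeries.coeff_mul_eq_coeff_trunc_mul_trunc _ _ hm, ← sq, braidSeries_sq,
    PowerSeries.coeff_mk]

theorem aeval_trunc_braidSeries_sq_mul_self {A : Type*} [Semiring A] [Algebra ℚ A] {N : ℕ}
    {z : A} (h : z ^ (N + 1) = 0) :
    aeval z (PowerSeries.trunc N braidSeries) ^ 2 * z =
      ∑ k ∈ Icc 1 (2 * N), ((-1) ^ (k + 1) / (k : ℚ)) • z ^ k := by
  have hz : z ^ N * z = 0 := by rwa [← pow_succ]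
  rw [← map_pow, aeval_mul_eq_sum_range_of_pow_mul_eq_zero _ hz,
    ← sum_subset (Icc_subset_Icc_right (by omega : N ≤ 2 * N)) fun k hk hkN => by
      simp only [mem_Icc, not_and, not_le] at hk hkN
      rw [pow_eq_zero_of_le (hkN hk.1) h, smul_zero],
    ← Ico_add_one_right_eq_Icc, sum_Ico_eq_sum_range, Nat.add_sub_cancel]
  refine sum_congr rfl fun m hm => ?_
  rw [coeff_trunc_braidSeries_sq (mem_range.1 hm), smul_mul_assoc, ← pow_succ, add_comm 1 m]
  congr 1
  push_cast
  ring

theorem stmt11_general (A : Type*) [Ring A] [Algebra ℚ A] (p q : A) (N : ℕ)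
    (h : (q * p) ^ N = 0) :
    (∑ k ∈ Finset.range N, braidC k • (p * (q * p) ^ k)) *
        (∑ l ∈ Finset.range N, braidC l • ((q * p) ^ l * q)) =
      ∑ k ∈ Finset.Icc 1 (2 * N), ((-1) ^ (k + 1) / (k : ℚ)) • (p * q) ^ k ∧
    (∑ l ∈ Finset.range N, braidC l • ((q * p) ^ l * q)) *
        (∑ k ∈ Finset.range N, braidC k • (p * (q * p) ^ k)) =
      ∑ k ∈ Finset.Icc 1 (2 * N), ((-1) ^ (k + 1) / (k : ℚ)) • (q * p) ^ k := by
  set S := fun z : A => aeval z (PowerSeries.trunc N braidSeries)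
  have hp : ∑ k ∈ range N, braidC k • (p * (q * p) ^ k) = p * S (q * p) := by
    simp only [S, aeval_trunc_braidSeries, mul_sum, mul_smul_comm]
  have hq : ∑ l ∈ range N, braidC l • ((q * p) ^ l * q) = S (q * p) * q := by
    simp only [S, aeval_trunc_braidSeries, sum_mul, smul_mul_assoc]
  have hpS : p * S (q * p) = S (p * q) * p := SemiconjBy.aeval (mul_assoc p q p).symm _
  have hqpS : (q * p) * S (q * p) = S (q * p) * (q * p) := (Commute.refl (q * p)).aeval _
  rw [hp, hq]
  constructor
  · have hpq : (p * q) ^ (N + 1) = 0 := by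
      rw [pow_succ, ← mul_assoc, ← (SemiconjBy.pow_right (mul_assoc p q p).symm N).eq, h,
        mul_zero, zero_mul]
    rw [← aeval_trunc_braidSeries_sq_mul_self hpq, sq, ← mul_assoc, hpS, mul_assoc _ p, hpS]
    simp only [S, mul_assoc]
  · rw [← aeval_trunc_braidSeries_sq_mul_self (by rw [pow_succ, h, zero_mul]), sq, mul_assoc,
      ← mul_assoc q, hqpS]
    simp only [S, mul_assoc]

/-- with `p̃ = Σ_{k<N} c_k p(qp)^k` and `q̃ = Σ_{l<N} c_l (qp)^l q`, one has
`p̃ q̃ = log(1 + pq)` and `q̃ p̃ = log(1 + qp)` (finite sums since `(qp)^N = 0`). -/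
theorem stmt11 (A : Type*) [Ring A] [Algebra ℚ A] (p q : A) (N : ℕ) (hN : 1 ≤ N)
    (h : (q * p) ^ N = 0) :
    (∑ k ∈ Finset.range N, braidC k • (p * (q * p) ^ k)) *
        (∑ l ∈ Finset.range N, braidC l • ((q * p) ^ l * q)) =
      ∑ k ∈ Finset.Icc 1 (2 * N), ((-1) ^ (k + 1) / (k : ℚ)) • (p * q) ^ k ∧
    (∑ l ∈ Finset.range N, braidC l • ((q * p) ^ l * q)) *
        (∑ k ∈ Finset.range N, braidC k • (p * (q * p) ^ k)) =
      ∑ k ∈ Finset.Icc 1 (2 * N), ((-1) ^ (k + 1) / (k : ℚ)) • (q * p) ^ k :=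
  stmt11_general A p q N h
end
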